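/- Let κ > 0, φ > 0, ν > 2, b ∈ ℝ and B ∈ ℝ². Then for every h ∈ ℝ² with h ≠ 0, b·C_κ^ν(h) − Σ_{i=1}^2 Σ_{j=1}^2 B_i B_j · ∂²C_κ^ν/∂h_i∂h_j (h) = b·C_κ^ν(h) + (⟨B,B⟩/(2ν))·C_κ^{ν−1}(h) − (⟨B,h⟩²/(4ν(ν−1)))·C_κ^{ν−2}(h). (This is the covariance function of Example 2, i.e. of the field generated by the simplest nested SPDE (κ²−Δ)^{α/2}X = (b + B^⊤∇)𝒲 in ℝ², obtained by applying the operator b − ∇^⊤BB^⊤∇ to the Matérn covariance.) -/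

import Mathlib

open Real

/-- The modified Bessel function of the second kind,
`K_ν(x) = ∫₀^∞ exp(−x cosh t) cosh(νt) dt`. -/
noncomputable def besselK (ν x : ℝ) : ℝ :=
  ∫ t in Set.Ioi (0 : ℝ), Real.exp (-x * Real.cosh t) * Real.cosh (ν * t)

/-- The Matérn covariance function on `ℝ²` with scale `κ`, variance parameter `φ²` and
shape parameter `ν`:
`C_κ^ν(h) = (2^{1−ν}φ²/(4π Γ(ν+1) κ^{2ν})) (κ‖h‖)^ν K_ν(κ‖h‖)`. -/
noncomputable def matern (κ φ ν : ℝ) (h : EuclideanSpace ℝ (Fin 2)) : ℝ :=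
  2 ^ (1 - ν) * φ ^ 2 / (4 * π * Real.Gamma (ν + 1) * κ ^ (2 * ν)) *
    (κ * ‖h‖) ^ ν * besselK ν (κ * ‖h‖)

/-- The partial derivative of `g : ℝ² → ℝ` in the `i`-th coordinate direction. -/
noncomputable def pderiv2 (i : Fin 2) (g : EuclideanSpace ℝ (Fin 2) → ℝ) :
    EuclideanSpace ℝ (Fin 2) → ℝ :=
  fun x => fderiv ℝ g x (EuclideanSpace.single i 1)

/-! Differentiating under the integral sign gives `K_ν' = -(K_{ν-1} + K_{ν+1}) / 2`, and
integrating `d/dt (exp (-x cosh t) sinh (ν t))` over `(0, ∞)` gives the recurrence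
`K_{ν+1} - K_{ν-1} = (2ν / x) K_ν`; together they yield `(x^ν K_ν(x))' = -x^ν K_{ν-1}(x)`.
With `Γ(ν + 1) = ν Γ(ν)` this turns into `∇C_κ^ν(h) = -C_κ^{ν-1}(h) h / (2ν)`, so the Hessian is
`∂ᵢ∂ⱼC_κ^ν(h) = -(δᵢⱼ C_κ^{ν-1}(h) - hᵢ hⱼ C_κ^{ν-2}(h) / (2(ν-1))) / (2ν)`, and contracting it
with `BᵢBⱼ` gives the formula. -/

open MeasureTheory Set

lemma one_add_sq_div_two_le_cosh (t : ℝ) : 1 + t ^ 2 / 2 ≤ cosh t := by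
  have hsinh : |t| / 2 ≤ sinh (|t| / 2) := self_le_sinh_iff.mpr (by positivity)
  have hcosh : cosh |t| = 1 + 2 * sinh (|t| / 2) ^ 2 := by
    have := cosh_two_mul (|t| / 2)
    rw [mul_div_cancel₀ _ two_ne_zero, cosh_sq] at this
    linarith
  rw [← cosh_abs, hcosh, ← sq_abs t]
  nlinarith [abs_nonneg t]

lemma integrable_exp_neg_mul_sq_add_mul {b : ℝ} (hb : 0 < b) (c : ℝ) :
    Integrable fun t : ℝ => exp (-b * t ^ 2 + c * t) := by
  have hsq : (fun t : ℝ => exp (-b * t ^ 2 + c * t)) =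
      fun t => exp (c ^ 2 / (4 * b)) * exp (-b * (t - c / (2 * b)) ^ 2) := by
    ext t
    rw [← exp_add]
    congr 1
    field_simp
    ring
  rw [hsq]
  exact ((integrable_exp_neg_mul_sq hb).comp_sub_right _).const_mul _

lemma integrable_exp_neg_mul_cosh_mul_cosh {x : ℝ} (hx : 0 < x) (ν : ℝ) :
    Integrable fun t : ℝ => exp (-x * cosh t) * cosh (ν * t) := by
  refine (((integrable_exp_neg_mul_sq_add_mul (half_pos hx) ν).add
    (integrable_exp_neg_mul_sq_add_mul (half_pos hx) (-ν))).const_mul (exp (-x) / 2)).mono'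
    (by fun_prop) (.of_forall fun t => ?_)
  have hdecay : exp (-x * cosh t) ≤ exp (-x) * exp (-(x / 2) * t ^ 2) := by
    rw [← exp_add]
    exact exp_le_exp.mpr (by nlinarith [one_add_sq_div_two_le_cosh t])
  rw [norm_of_nonneg (by positivity)]
  calc exp (-x * cosh t) * cosh (ν * t)
      ≤ exp (-x) * exp (-(x / 2) * t ^ 2) * cosh (ν * t) := by gcongr
    _ = _ := by
      rw [Pi.add_apply, cosh_eq, exp_add, exp_add, neg_mul ν]
      ring

lemma cosh_mul_exp_neg_mul_cosh_mul_cosh (ν x t : ℝ) :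
    cosh t * (exp (-x * cosh t) * cosh (ν * t)) =
      (exp (-x * cosh t) * cosh ((ν - 1) * t) + exp (-x * cosh t) * cosh ((ν + 1) * t)) / 2 := by
  rw [sub_mul, add_mul, one_mul, cosh_sub, cosh_add]
  ring

lemma integrable_cosh_mul_exp_neg_mul_cosh_mul_cosh {x : ℝ} (hx : 0 < x) (ν : ℝ) :
    Integrable fun t : ℝ => cosh t * (exp (-x * cosh t) * cosh (ν * t)) := by
  simp_rw [cosh_mul_exp_neg_mul_cosh_mul_cosh]
  exact ((integrable_exp_neg_mul_cosh_mul_cosh hx _).add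
    (integrable_exp_neg_mul_cosh_mul_cosh hx _)).div_const 2

lemma integral_cosh_mul_exp_neg_mul_cosh_mul_cosh {x : ℝ} (hx : 0 < x) (ν : ℝ) :
    ∫ t in Ioi 0, cosh t * (exp (-x * cosh t) * cosh (ν * t)) =
      (besselK (ν - 1) x + besselK (ν + 1) x) / 2 := by
  simp_rw [cosh_mul_exp_neg_mul_cosh_mul_cosh]
  rw [integral_div, integral_add (integrable_exp_neg_mul_cosh_mul_cosh hx _).integrableOn
    (integrable_exp_neg_mul_cosh_mul_cosh hx _).integrableOn]
  rfl

lemma hasDerivAt_besselK (ν : ℝ) {x : ℝ} (hx : 0 < x) :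
    HasDerivAt (besselK ν) (-((besselK (ν - 1) x + besselK (ν + 1) x) / 2)) x := by
  -- differentiate under the integral, dominating on `y > x / 2` by the integrand at `x / 2`
  have hdiff := hasDerivAt_integral_of_dominated_loc_of_deriv_le (μ := volume.restrict (Ioi 0))
    (F := fun y t => exp (-y * cosh t) * cosh (ν * t))
    (F' := fun y t => -(cosh t * (exp (-y * cosh t) * cosh (ν * t))))
    (bound := fun t => cosh t * (exp (-(x / 2) * cosh t) * cosh (ν * t)))
    (Ioi_mem_nhds (half_lt_self hx)) (.of_forall fun _ => by fun_prop)
    (integrable_exp_neg_mul_cosh_mul_cosh hx ν).integrableOn (by fun_prop)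
    (.of_forall fun t y hy => ?_)
    (integrable_cosh_mul_exp_neg_mul_cosh_mul_cosh (half_pos hx) ν).integrableOn
    (.of_forall fun t y _ => ?_)
  · rw [integral_neg, integral_cosh_mul_exp_neg_mul_cosh_mul_cosh hx] at hdiff
    exact hdiff.2
  · rw [norm_neg, norm_of_nonneg (by positivity)]
    gcongr
    exact hy.le
  · exact (((hasDerivAt_neg y).mul_const (cosh t)).exp.mul_const (cosh (ν * t))).congr_deriv
      (by ring)

lemma integrable_exp_neg_mul_cosh_mul_sinh {x : ℝ} (hx : 0 < x) (ν : ℝ) :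
    Integrable fun t : ℝ => exp (-x * cosh t) * sinh (ν * t) := by
  refine (integrable_exp_neg_mul_cosh_mul_cosh hx ν).mono' (by fun_prop)
    (.of_forall fun t => ?_)
  rw [norm_mul, norm_of_nonneg (exp_pos _).le, norm_eq_abs, abs_sinh, ← cosh_abs (ν * t)]
  gcongr
  exact (sinh_lt_cosh _).le

lemma besselK_add_one_sub_besselK_sub_one {x : ℝ} (hx : 0 < x) (ν : ℝ) :
    besselK (ν + 1) x - besselK (ν - 1) x = 2 * ν / x * besselK ν x := by
  set g : ℝ → ℝ → ℝ := fun μ t => exp (-x * cosh t) * cosh (μ * t) with hg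
  have hg_int : ∀ μ, IntegrableOn (g μ) (Ioi 0) := fun μ =>
    (integrable_exp_neg_mul_cosh_mul_cosh hx μ).integrableOn
  have hderiv : ∀ t, HasDerivAt (fun t => exp (-x * cosh t) * sinh (ν * t))
      (ν * g ν t - x / 2 * (g (ν + 1) t - g (ν - 1) t)) t := by
    intro t
    have hsinh : HasDerivAt (fun t => sinh (ν * t)) (cosh (ν * t) * ν) t := by
      simpa using ((hasDerivAt_id t).const_mul ν).sinh
    refine (((hasDerivAt_cosh t).const_mul (-x)).exp.mul hsinh).congr_deriv ?_
    simp only [hg, add_mul, sub_mul, one_mul, cosh_add, cosh_sub]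
    ring
  have hint : IntegrableOn (fun t => ν * g ν t - x / 2 * (g (ν + 1) t - g (ν - 1) t)) (Ioi 0) :=
    ((hg_int ν).const_mul ν).sub (((hg_int _).sub (hg_int _)).const_mul _)
  have hvalue : ∫ t in Ioi 0, (ν * g ν t - x / 2 * (g (ν + 1) t - g (ν - 1) t)) =
      ν * besselK ν x - x / 2 * (besselK (ν + 1) x - besselK (ν - 1) x) := by
    rw [integral_sub, integral_const_mul, integral_const_mul, integral_sub]
    · rfl
    · exact hg_int _
    · exact hg_int _
    · exact (hg_int ν).const_mul ν
    · exact ((hg_int _).sub (hg_int _)).const_mul _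
  have hzero := integral_Ioi_of_hasDerivAt_of_tendsto' (fun t _ => hderiv t) hint
    (tendsto_zero_of_hasDerivAt_of_integrableOn_Ioi (fun t _ => hderiv t) hint
      (integrable_exp_neg_mul_cosh_mul_sinh hx ν).integrableOn)
  rw [hvalue, mul_zero, sinh_zero, mul_zero, sub_zero] at hzero
  field_simp
  linarith

lemma hasDerivAt_rpow_mul_besselK (ν : ℝ) {x : ℝ} (hx : 0 < x) :
    HasDerivAt (fun y => y ^ ν * besselK ν y) (-(x ^ ν * besselK (ν - 1) x)) x := by
  refine ((hasDerivAt_rpow_const (Or.inl hx.ne')).mul (hasDerivAt_besselK ν hx)).congr_deriv ?_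
  have hrec := besselK_add_one_sub_besselK_sub_one hx ν
  rw [rpow_sub_one hx.ne']
  linear_combination (-(x ^ ν / 2)) * hrec

noncomputable def maternConst (κ φ ν : ℝ) : ℝ :=
  2 ^ (1 - ν) * φ ^ 2 / (4 * π * Gamma (ν + 1) * κ ^ (2 * ν))

noncomputable def maternProfile (κ φ ν r : ℝ) : ℝ :=
  maternConst κ φ ν * (κ * r) ^ ν * besselK ν (κ * r)

lemma matern_eq_maternProfile_comp_norm (κ φ ν : ℝ) :
    matern κ φ ν = maternProfile κ φ ν ∘ norm :=
  rfl

lemma maternConst_sub_one {κ : ℝ} (hκ : 0 < κ) (φ : ℝ) {ν : ℝ} (hν : ν ≠ 0) :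
    maternConst κ φ (ν - 1) = 2 * ν * κ ^ 2 * maternConst κ φ ν := by
  unfold maternConst
  rcases eq_or_ne (Gamma ν) 0 with hΓ | hΓ
  · simp [Gamma_add_one hν, hΓ]
  have h2 : (2 : ℝ) ^ (1 - (ν - 1)) = 2 * 2 ^ (1 - ν) := by
    rw [show 1 - (ν - 1) = 1 + (1 - ν) by ring, rpow_add two_pos, rpow_one]
  have hκ2 : κ ^ (2 * (ν - 1)) = κ ^ (2 * ν) / κ ^ 2 := by
    rw [mul_sub, mul_one, rpow_sub hκ, rpow_two]
  rw [sub_add_cancel, Gamma_add_one hν, h2, hκ2]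
  have := rpow_pos_of_pos hκ (2 * ν)
  field_simp

lemma hasDerivAt_maternProfile {κ : ℝ} (hκ : 0 < κ) (φ : ℝ) {ν r : ℝ} (hν : ν ≠ 0) (hr : 0 < r) :
    HasDerivAt (maternProfile κ φ ν) (-(r / (2 * ν)) * maternProfile κ φ (ν - 1) r) r := by
  have hκr : 0 < κ * r := mul_pos hκ hr
  have hchain := ((hasDerivAt_rpow_mul_besselK ν hκr).comp r
    ((hasDerivAt_id r).const_mul κ)).const_mul (maternConst κ φ ν)
  unfold maternProfile
  simp only [mul_assoc]
  refine hchain.congr_deriv ?_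
  rw [maternConst_sub_one hκ φ hν, rpow_sub_one hκr.ne']
  field_simp

lemma hasFDerivAt_norm {E : Type*} [NormedAddCommGroup E] [InnerProductSpace ℝ E] {x : E}
    (hx : x ≠ 0) : HasFDerivAt (fun y : E => ‖y‖) (‖x‖⁻¹ • innerSL ℝ x) x := by
  have hsqrt := (hasStrictFDerivAt_norm_sq x).hasFDerivAt.sqrt (by positivity)
  simp only [sqrt_sq (norm_nonneg _)] at hsqrt
  refine hsqrt.congr_fderiv ?_
  ext v
  simp only [one_div, mul_inv_rev, smul_apply, coe_innerSL_apply,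
    nsmul_eq_mul, Nat.cast_ofNat, smul_eq_mul]
  field_simp

lemma hasFDerivAt_matern {κ : ℝ} (hκ : 0 < κ) (φ : ℝ) {ν : ℝ} (hν : ν ≠ 0)
    {z : EuclideanSpace ℝ (Fin 2)} (hz : z ≠ 0) :
    HasFDerivAt (matern κ φ ν) (-(matern κ φ (ν - 1) z / (2 * ν)) • innerSL ℝ z) z := by
  have hchain := (hasDerivAt_maternProfile hκ φ hν (norm_pos_iff.mpr hz)).comp_hasFDerivAt z
    (hasFDerivAt_norm hz)
  rw [matern_eq_maternProfile_comp_norm]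
  refine hchain.congr_fderiv ?_
  rw [smul_smul, matern_eq_maternProfile_comp_norm, Function.comp_apply]
  congr 1
  field_simp [norm_ne_zero_iff.mpr hz]

lemma pderiv2_matern {κ : ℝ} (hκ : 0 < κ) (φ : ℝ) {ν : ℝ} (hν : ν ≠ 0) (j : Fin 2)
    {z : EuclideanSpace ℝ (Fin 2)} (hz : z ≠ 0) :
    pderiv2 j (matern κ φ ν) z = -(matern κ φ (ν - 1) z / (2 * ν)) * z j := by
  simp [pderiv2, (hasFDerivAt_matern hκ φ hν hz).fderiv, EuclideanSpace.inner_single_right]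

lemma pderiv2_pderiv2_matern {κ : ℝ} (hκ : 0 < κ) (φ : ℝ) {ν : ℝ} (hν : ν ≠ 0)
    (hν₁ : ν - 1 ≠ 0) (i j : Fin 2) {h : EuclideanSpace ℝ (Fin 2)} (hh : h ≠ 0) :
    pderiv2 i (pderiv2 j (matern κ φ ν)) h =
      -((if i = j then 1 else 0) * matern κ φ (ν - 1) h -
        h i * h j * matern κ φ (ν - 2) h / (2 * (ν - 1))) / (2 * ν) := by
  have hlocal : pderiv2 j (matern κ φ ν) =ᶠ[nhds h]
      fun z => -(2 * ν)⁻¹ * (matern κ φ (ν - 1) z * z j) := by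
    filter_upwards [isOpen_compl_singleton.mem_nhds hh] with z hz
    rw [pderiv2_matern hκ φ hν j hz]
    ring
  have hderiv : HasFDerivAt (fun z => -(2 * ν)⁻¹ * (matern κ φ (ν - 1) z * z j)) _ h :=
    ((hasFDerivAt_matern hκ φ hν₁ hh).mul
      (EuclideanSpace.proj j : EuclideanSpace ℝ (Fin 2) →L[ℝ] ℝ).hasFDerivAt).const_mul
      (-(2 * ν)⁻¹)
  change fderiv ℝ (pderiv2 j (matern κ φ ν)) h (EuclideanSpace.single i 1) = _
  rw [hlocal.fderiv_eq, hderiv.fderiv]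
  simp only [smul_apply, add_apply, PiLp.proj_apply,
    PiLp.single_apply, coe_innerSL_apply, EuclideanSpace.inner_single_right, conj_trivial,
    smul_eq_mul, @eq_comm _ j i, show ν - 1 - 1 = ν - 2 by ring]
  ring

theorem matern_second_directional_general (κ φ ν b : ℝ) (hκ : 0 < κ) (hν : 2 < ν)
    (B : EuclideanSpace ℝ (Fin 2)) (h : EuclideanSpace ℝ (Fin 2)) (hh : h ≠ 0) :
    b * matern κ φ ν h
        - ∑ i : Fin 2, ∑ j : Fin 2, B i * B j * pderiv2 i (pderiv2 j (matern κ φ ν)) h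
      = b * matern κ φ ν h + (inner ℝ B B : ℝ) / (2 * ν) * matern κ φ (ν - 1) h
        - (inner ℝ B h : ℝ) ^ 2 / (4 * ν * (ν - 1)) * matern κ φ (ν - 2) h := by
  have hν₀ : ν ≠ 0 := by linarith
  have hν₁ : ν - 1 ≠ 0 := by linarith
  simp only [pderiv2_pderiv2_matern hκ φ hν₀ hν₁ _ _ hh, PiLp.inner_apply, RCLike.inner_apply,
    conj_trivial, Fin.sum_univ_two, Fin.isValue, ↓reduceIte, zero_ne_one, one_ne_zero]
  field_simp
  ring

/-- The covariance function of the simplest nested SPDE model (Example 2): applying the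
operator `b − ∇^⊤BB^⊤∇` to the Matérn covariance gives
`b·C_κ^ν(h) + (⟨B,B⟩/(2ν))·C_κ^{ν−1}(h) − (⟨B,h⟩²/(4ν(ν−1)))·C_κ^{ν−2}(h)`. -/
theorem matern_second_directional (κ φ ν b : ℝ) (hκ : 0 < κ) (hφ : 0 < φ) (hν : 2 < ν)
    (B : EuclideanSpace ℝ (Fin 2)) (h : EuclideanSpace ℝ (Fin 2)) (hh : h ≠ 0) :
    b * matern κ φ ν h
        - ∑ i : Fin 2, ∑ j : Fin 2, B i * B j * pderiv2 i (pderiv2 j (matern κ φ ν)) h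
      = b * matern κ φ ν h + (inner ℝ B B : ℝ) / (2 * ν) * matern κ φ (ν - 1) h
        - (inner ℝ B h : ℝ) ^ 2 / (4 * ν * (ν - 1)) * matern κ φ (ν - 2) h :=
  matern_second_directional_general κ φ ν b hκ hν B h hh
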